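/- arXiv:math/9905197 — 2 statements merged into one kernel-verified Lean document; each statement's English description precedes it below -/
import Mathlib

section
/- No neighborhood of the point p = (0,1) in the topologist's sine curve X = ({0} × [−1,1]) ∪ {(t, sin(1/t)) : 0 < t ≤ 1} embeds in a product S × (−1,1) of a zero-dimensional space S with an open arc. -/
open Set Topology

lemma aux_sep {S : Type} [TopologicalSpace S]
    (hb : TopologicalSpace.IsTopologicalBasis {s : Set S | IsClopen s})
    {Y : Type} [TopologicalSpace Y] {I : Type} [TopologicalSpace I]
    {e : Y → S × I} (hec : Continuous e)
    {A : Set Y} (hA : IsPreconnected A) {u v : Y} (hu : u ∈ A) (hv : v ∈ A)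
    {O : Set S} (hO : IsOpen O) (huO : (e u).1 ∈ O) (hvO : (e v).1 ∉ O) : False := by
  obtain ⟨C, hC, huC, hCO⟩ := hb.exists_subset_of_mem_open huO hO
  have hK : IsClopen ((fun y => (e y).1) ⁻¹' C) :=
    hC.preimage (continuous_fst.comp hec)
  have := hA.subset_isClopen hK ⟨u, hu, huC⟩
  exact hvO (hCO (this hv))

lemma aux_inj {S : Type} [TopologicalSpace S]
    (hb : TopologicalSpace.IsTopologicalBasis {s : Set S | IsClopen s})
    {Y : Type} [TopologicalSpace Y] [T2Space Y]
    {e : Y → S × Set.Ioo (-1:ℝ) 1} (he : Topology.IsEmbedding e)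
    {A : Set Y} (hA : IsPreconnected A) {u v : Y} (hu : u ∈ A) (hv : v ∈ A)
    (hf : ((e u).2 : ℝ) = ((e v).2 : ℝ)) : u = v := by
  by_contra h
  have h1 : ¬ Inseparable u v := fun hi => h hi.eq
  have h2 : ¬ Inseparable (e u) (e v) := fun hi =>
    h1 (he.toIsInducing.inseparable_iff.mp hi)
  have h3 : (e u).2 = (e v).2 := Subtype.ext hf
  have h4 : ¬ Inseparable (e u).1 (e v).1 := by
    intro hi
    apply h2
    rw [← Prod.mk.eta (p := e u), ← Prod.mk.eta (p := e v)]
    exact inseparable_prod.mpr ⟨hi, h3 ▸ Inseparable.refl _⟩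
  rw [inseparable_iff_forall_isOpen] at h4
  push_neg at h4
  obtain ⟨O, hO, hiff⟩ := h4
  rcases hiff with ⟨hm, hv'⟩ | ⟨hm, hv'⟩
  · exact aux_sep hb he.continuous hA hu hv hO hm hv'
  · exact aux_sep hb he.continuous hA hv hu hO hv' hm

lemma aux_two_points {F : ℝ → ℝ} (hF : Continuous F) {a b c m : ℝ}
    (hab : a ≤ b) (hbc : b ≤ c) (h1 : F a < m) (h2 : m < F b) (h3 : F c < m) :
    ∃ s1 s2, s1 ∈ Set.Icc a b ∧ s2 ∈ Set.Icc b c ∧ s1 ≠ s2 ∧ F s1 = m ∧ F s2 = m := by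
  obtain ⟨s1, hs1, hFs1⟩ := intermediate_value_Icc hab hF.continuousOn ⟨h1.le, h2.le⟩
  obtain ⟨s2, hs2, hFs2⟩ := intermediate_value_Icc' hbc hF.continuousOn ⟨h3.le, h2.le⟩
  refine ⟨s1, s2, hs1, hs2, ?_, hFs1, hFs2⟩
  rintro rfl
  have hb1 : s1 = b := le_antisymm hs1.2 hs2.1
  rw [hb1] at hFs1
  exact (ne_of_gt h2) hFs1

lemma aux_sin_ge {θ x : ℝ} (h0 : 0 ≤ θ) (h1 : θ ≤ x) (h2 : x ≤ Real.pi - θ) :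
    Real.sin θ ≤ Real.sin x := by
  have hpi := Real.pi_pos
  rcases le_total x (Real.pi/2) with h | h
  · exact Real.strictMonoOn_sin.monotoneOn ⟨by linarith, by linarith⟩ ⟨by linarith, h⟩ h1
  · rw [← Real.sin_pi_sub x]
    exact Real.strictMonoOn_sin.monotoneOn ⟨by linarith, by linarith⟩
      ⟨by linarith, by linarith⟩ (by linarith)

/-- The topologist's sine curve. -/
def sineCurve : Set (ℝ × ℝ) :=
  ({0} ×ˢ Set.Icc (-1 : ℝ) 1) ∪
    {p : ℝ × ℝ | ∃ t : ℝ, 0 < t ∧ t ≤ 1 ∧ p = (t, Real.sin (1 / t))}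

/-- No neighborhood of the point `(0, 1)` in the topologist's sine curve embeds
in the product of a zero-dimensional space with an open arc. -/
theorem sineCurve_no_matchbox_nbhd :
    ¬ ∃ (S : Type) (_ : TopologicalSpace S) (U : Set sineCurve),
      TopologicalSpace.IsTopologicalBasis {s : Set S | IsClopen s} ∧
      U ∈ nhds (⟨((0 : ℝ), (1 : ℝ)), Or.inl ⟨rfl, by norm_num⟩⟩ : sineCurve) ∧
      ∃ e : U → S × Set.Ioo (-1 : ℝ) 1, Topology.IsEmbedding e := by
  rintro ⟨S, _, U, hb, hU0, e, he⟩
  have hpi := Real.pi_pos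
  have hpmem : (((0 : ℝ), (1 : ℝ)) : ℝ × ℝ) ∈ sineCurve := Or.inl ⟨rfl, by norm_num⟩
  set p : sineCurve := ⟨((0 : ℝ), (1 : ℝ)), hpmem⟩ with hpdef
  have hU : U ∈ nhds p := hU0
  obtain ⟨δ, hδ0, hball⟩ := Metric.mem_nhds_iff.mp hU
  set d := min δ 1 with hddef
  have hd0 : 0 < d := lt_min hδ0 one_pos
  have hd1 : d ≤ 1 := min_le_right _ _
  have hdδ : d ≤ δ := min_le_left _ _
  -- segment points
  have hseg : ∀ y : ℝ, 1 - d/2 ≤ y → y ≤ 1 → (((0:ℝ), y) : ℝ × ℝ) ∈ sineCurve :=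
    fun y h1 h2 => Or.inl ⟨rfl, ⟨by linarith, h2⟩⟩
  have hsegU : ∀ (y : ℝ) (h1 : 1 - d/2 ≤ y) (h2 : y ≤ 1),
      (⟨((0:ℝ), y), hseg y h1 h2⟩ : sineCurve) ∈ U := by
    intro y h1 h2
    apply hball
    rw [Metric.mem_ball, Subtype.dist_eq, Prod.dist_eq]
    apply max_lt
    · simpa [hpdef] using hδ0
    · show dist y (1:ℝ) < δ
      rw [Real.dist_eq, abs_lt]
      constructor <;> linarith
  have hpU : p ∈ U := mem_of_mem_nhds hU
  set f : ↥U → ℝ := fun x => ((e x).2 : ℝ) with hfdef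
  have hfc : Continuous f := continuous_subtype_val.comp (continuous_snd.comp he.continuous)
  set p' : ↥U := ⟨p, hpU⟩ with hp'def
  set r : ↥U := ⟨⟨((0:ℝ), 1 - d/2), hseg _ le_rfl (by linarith)⟩,
    hsegU _ le_rfl (by linarith)⟩ with hrdef
  -- the segment is connected, so f is injective on it, so f p' ≠ f r
  have hcl1 : ∀ y : ℝ, 1 - d/2 ≤ max (1 - d/2) (min 1 y) := fun y => le_max_left _ _
  have hcl2 : ∀ y : ℝ, max (1 - d/2) (min 1 y) ≤ 1 := fun y =>
    max_le (by linarith) (min_le_left _ _)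
  set g : ℝ → ↥U := fun y =>
    ⟨⟨((0:ℝ), max (1 - d/2) (min 1 y)), hseg _ (hcl1 y) (hcl2 y)⟩,
      hsegU _ (hcl1 y) (hcl2 y)⟩ with hgdef
  have hgc : Continuous g := by
    apply Continuous.subtype_mk
    apply Continuous.subtype_mk
    exact continuous_const.prodMk (continuous_const.max (continuous_const.min continuous_id))
  have hg1 : g 1 = p' := by
    apply Subtype.ext; apply Subtype.ext
    simp only [hgdef, hp'def, hpdef]
    rw [min_self, max_eq_right (by linarith : 1 - d/2 ≤ (1:ℝ))]
  have hg2 : g (1 - d/2) = r := by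
    apply Subtype.ext; apply Subtype.ext
    simp only [hgdef, hrdef]
    rw [min_eq_right (by linarith : 1 - d/2 ≤ (1:ℝ)), max_self]
  have hne : f p' ≠ f r := by
    intro hfe
    have heq : p' = r := aux_inj hb he (isPreconnected_range hgc)
      ⟨1, hg1⟩ ⟨1 - d/2, hg2⟩ hfe
    have h2 := congrArg (fun x : ↥U => ((x : sineCurve) : ℝ × ℝ).2) heq
    simp only [hp'def, hrdef, hpdef] at h2
    linarith
  set Δ := |f p' - f r| with hΔdef
  have hΔ0 : 0 < Δ := abs_pos.mpr (sub_ne_zero.mpr hne)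
  obtain ⟨δ₁, hδ₁0, hδ₁⟩ :=
    Metric.continuousAt_iff.mp (hfc.continuousAt (x := p')) (Δ/4) (by positivity)
  obtain ⟨δ₂, hδ₂0, hδ₂⟩ :=
    Metric.continuousAt_iff.mp (hfc.continuousAt (x := r)) (Δ/4) (by positivity)
  set T := min δ (min δ₁ δ₂) with hTdef
  have hT0 : 0 < T := lt_min hδ0 (lt_min hδ₁0 hδ₂0)
  set θ := Real.arcsin (1 - d/2) with hθdef
  have hθ0 : 0 < θ := Real.arcsin_pos.mpr (by linarith)
  have hθsin : Real.sin θ = 1 - d/2 := Real.sin_arcsin (by linarith) (by linarith)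
  have hθpi : θ ≤ Real.pi / 2 := Real.arcsin_le_pi_div_two _
  obtain ⟨k, hk⟩ := exists_nat_gt (1 / T)
  have hk0 : 0 < (k:ℝ) := lt_trans (by positivity) hk
  have hkne : k ≠ 0 := by rintro rfl; simp at hk0
  have hk1 : (1:ℝ) ≤ (k:ℝ) := by exact_mod_cast Nat.one_le_iff_ne_zero.mpr hkne
  have h2pik : (k:ℝ) ≤ 2 * Real.pi * k := by
    nlinarith [mul_nonneg (by linarith [Real.pi_gt_three] : (0:ℝ) ≤ 2 * Real.pi - 1) hk0.le]
  set uB := 2 * Real.pi * k + θ with huBdef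
  set um := 2 * Real.pi * k + Real.pi / 2 with humdef
  set uA := 2 * Real.pi * k + Real.pi - θ with huAdef
  have h2pik0 : (0:ℝ) ≤ 2 * Real.pi * k := by positivity
  have huB0 : 0 < uB := by rw [huBdef]; linarith
  have hBorder : uB ≤ um := by rw [huBdef, humdef]; linarith
  have hAorder : um ≤ uA := by rw [humdef, huAdef]; linarith
  have huA0 : 0 < uA := lt_of_lt_of_le huB0 (hBorder.trans hAorder)
  have hum0 : 0 < um := lt_of_lt_of_le huB0 hBorder
  have huB1 : 1 ≤ uB := by rw [huBdef]; nlinarith [Real.pi_gt_three]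
  have huBT : 1 / T < uB := by rw [huBdef]; linarith
  set tB := 1 / uB with htBdef
  set tm := 1 / um with htmdef
  set tA := 1 / uA with htAdef
  have htA0 : 0 < tA := by rw [htAdef]; positivity
  have htAB : tA ≤ tB := one_div_le_one_div_of_le huB0 (hBorder.trans hAorder)
  have htAm : tA ≤ tm := one_div_le_one_div_of_le hum0 hAorder
  have htmB : tm ≤ tB := one_div_le_one_div_of_le huB0 hBorder
  have htBT : tB < T := by
    have h1T : 1 < uB * T := (div_lt_iff₀ hT0).mp huBT
    rw [htBdef, div_lt_iff₀ huB0, mul_comm]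
    exact h1T
  have htB1 : tB ≤ 1 := by rw [htBdef, div_le_one huB0]; exact huB1
  -- the sine bound on the arc
  have hsinb : ∀ t : ℝ, tA ≤ t → t ≤ tB →
      1 - d/2 ≤ Real.sin (1/t) ∧ Real.sin (1/t) ≤ 1 := by
    intro t h1 h2
    have ht0 : 0 < t := lt_of_lt_of_le htA0 h1
    have hu1 : uB ≤ 1/t := by
      have h := one_div_le_one_div_of_le ht0 h2
      rwa [htBdef, one_div_one_div] at h
    have hu2 : 1/t ≤ uA := by
      have h := one_div_le_one_div_of_le htA0 h1
      rwa [htAdef, one_div_one_div] at h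
    have hsw : Real.sin (1/t) = Real.sin (1/t - 2 * Real.pi * k) := by
      have hrw : (1:ℝ)/t = (1/t - 2 * Real.pi * k) + (k:ℤ) * (2 * Real.pi) := by
        push_cast; ring
      conv_lhs => rw [hrw]
      rw [Real.sin_add_int_mul_two_pi]
    constructor
    · rw [hsw, ← hθsin]
      apply aux_sin_ge hθ0.le
      · rw [huBdef] at hu1; linarith
      · rw [huAdef] at hu2; linarith
    · exact Real.sin_le_one _
  have harcmem : ∀ (t : ℝ), tA ≤ t → t ≤ tB →
      ((t, Real.sin (1/t)) : ℝ × ℝ) ∈ sineCurve :=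
    fun t h1 h2 => Or.inr ⟨t, lt_of_lt_of_le htA0 h1, h2.trans htB1, rfl⟩
  have harcU : ∀ (t : ℝ) (h1 : tA ≤ t) (h2 : t ≤ tB),
      (⟨(t, Real.sin (1/t)), harcmem t h1 h2⟩ : sineCurve) ∈ U := by
    intro t h1 h2
    have hs := hsinb t h1 h2
    apply hball
    rw [Metric.mem_ball, Subtype.dist_eq, Prod.dist_eq]
    apply max_lt
    · rw [Real.dist_eq, sub_zero, abs_of_pos (lt_of_lt_of_le htA0 h1)]
      calc t ≤ tB := h2
        _ < T := htBT
        _ ≤ δ := min_le_left _ _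
    · rw [Real.dist_eq, abs_lt]
      constructor <;> linarith
  have hclA : ∀ t : ℝ, tA ≤ max tA (min tB t) := fun t => le_max_left _ _
  have hclB : ∀ t : ℝ, max tA (min tB t) ≤ tB := fun t => max_le htAB (min_le_left _ _)
  set γ : ℝ → ↥U := fun t =>
    ⟨⟨(max tA (min tB t), Real.sin (1 / max tA (min tB t))),
      harcmem _ (hclA t) (hclB t)⟩, harcU _ (hclA t) (hclB t)⟩ with hγdef
  have hγc : Continuous γ := by
    apply Continuous.subtype_mk
    apply Continuous.subtype_mk
    have hc : Continuous fun t : ℝ => max tA (min tB t) :=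
      continuous_const.max (continuous_const.min continuous_id)
    apply hc.prodMk
    apply Real.continuous_sin.comp
    simp only [one_div]
    exact hc.inv₀ (fun t => ne_of_gt (lt_of_lt_of_le htA0 (hclA t)))
  have hclamp_eq : ∀ t : ℝ, tA ≤ t → t ≤ tB → max tA (min tB t) = t := fun t h1 h2 => by
    rw [min_eq_right h2, max_eq_right h1]
  have hγval : ∀ (t : ℝ), tA ≤ t → t ≤ tB →
      ((γ t : sineCurve) : ℝ × ℝ) = (t, Real.sin (1/t)) := by
    intro t h1 h2
    simp only [hγdef]
    rw [hclamp_eq t h1 h2]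
  have hsinA : Real.sin (1 / tA) = 1 - d/2 := by
    rw [htAdef, one_div_one_div, huAdef]
    have hrw : 2 * Real.pi * k + Real.pi - θ = (Real.pi - θ) + (k:ℤ) * (2 * Real.pi) := by
      push_cast; ring
    rw [hrw, Real.sin_add_int_mul_two_pi, Real.sin_pi_sub, hθsin]
  have hsinB : Real.sin (1 / tB) = 1 - d/2 := by
    rw [htBdef, one_div_one_div, huBdef]
    have hrw : 2 * Real.pi * k + θ = θ + (k:ℤ) * (2 * Real.pi) := by
      push_cast; ring
    rw [hrw, Real.sin_add_int_mul_two_pi, hθsin]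
  have hsinm : Real.sin (1 / tm) = 1 := by
    rw [htmdef, one_div_one_div, humdef]
    have hrw : 2 * Real.pi * k + Real.pi/2 = Real.pi/2 + (k:ℤ) * (2 * Real.pi) := by
      push_cast; ring
    rw [hrw, Real.sin_add_int_mul_two_pi, Real.sin_pi_div_two]
  set F : ℝ → ℝ := fun t => f (γ t) with hFdef
  have hFc : Continuous F := hfc.comp hγc
  -- endpoint values of F are close to f r, middle value close to f p'
  have hdArc_r : ∀ t : ℝ, tA ≤ t → t ≤ tB → Real.sin (1/t) = 1 - d/2 →
      |F t - f r| < Δ/4 := by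
    intro t h1 h2 hs
    have hdist : dist (γ t) r < δ₂ := by
      have hdval : dist (γ t) r
          = dist ((t, Real.sin (1/t)) : ℝ × ℝ) ((((0:ℝ), 1 - d/2)) : ℝ × ℝ) := by
        rw [Subtype.dist_eq, Subtype.dist_eq]
        exact congrArg₂ dist (hγval t h1 h2) rfl
      rw [hdval, hs, Prod.dist_eq]
      apply max_lt
      · rw [Real.dist_eq, sub_zero, abs_of_pos (lt_of_lt_of_le htA0 h1)]
        calc t ≤ tB := h2
          _ < T := htBT
          _ ≤ δ₂ := le_trans (min_le_right _ _) (min_le_right _ _)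
      · simpa using hδ₂0
    have h := hδ₂ hdist
    rwa [Real.dist_eq] at h
  have hdArc_p : |F tm - f p'| < Δ/4 := by
    have hdist : dist (γ tm) p' < δ₁ := by
      have hdval : dist (γ tm) p'
          = dist ((tm, Real.sin (1/tm)) : ℝ × ℝ) ((((0:ℝ), (1:ℝ))) : ℝ × ℝ) := by
        rw [Subtype.dist_eq, Subtype.dist_eq]
        exact congrArg₂ dist (hγval tm htAm htmB) rfl
      rw [hdval, hsinm, Prod.dist_eq]
      apply max_lt
      · rw [Real.dist_eq, sub_zero, abs_of_pos (lt_of_lt_of_le htA0 htAm)]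
        calc tm ≤ tB := htmB
          _ < T := htBT
          _ ≤ δ₁ := le_trans (min_le_right _ _) (min_le_left _ _)
      · simpa using hδ₁0
    have h := hδ₁ hdist
    rwa [Real.dist_eq] at h
  have hFA := hdArc_r tA le_rfl htAB hsinA
  have hFB := hdArc_r tB htAB le_rfl hsinB
  have hA' := abs_lt.mp hFA
  have hB' := abs_lt.mp hFB
  have hm' := abs_lt.mp hdArc_p
  -- final contradiction machinery
  have hfinal : ∀ s1 s2 : ℝ, s1 ∈ Set.Icc tA tm → s2 ∈ Set.Icc tm tB → s1 ≠ s2 →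
      F s1 = F s2 → False := by
    intro s1 s2 hs1 hs2 hne12 hFeq
    have h1 : tA ≤ s1 := hs1.1
    have h2 : s1 ≤ tB := hs1.2.trans htmB
    have h3 : tA ≤ s2 := htAm.trans hs2.1
    have h4 : s2 ≤ tB := hs2.2
    have heq : γ s1 = γ s2 := aux_inj hb he (isPreconnected_range hγc)
      ⟨s1, rfl⟩ ⟨s2, rfl⟩ hFeq
    have h5 := congrArg (fun x : ↥U => ((x : sineCurve) : ℝ × ℝ).1) heq
    simp only [hγdef] at h5
    rw [hclamp_eq s1 h1 h2, hclamp_eq s2 h3 h4] at h5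
    exact hne12 h5
  set m := (f p' + f r)/2 with hmdef
  rcases lt_or_gt_of_ne hne with hlt | hlt
  · -- f p' < f r
    have hΔeq : Δ = f r - f p' := by rw [hΔdef, abs_of_neg (by linarith)]; ring
    obtain ⟨s1, s2, hs1, hs2, hne12, hF1, hF2⟩ :=
      aux_two_points (F := fun t => -F t) hFc.neg htAm htmB
        (by show -F tA < -m; linarith) (by show -m < -F tm; linarith)
        (by show -F tB < -m; linarith)
    have e1 : F s1 = m := neg_inj.mp hF1
    have e2 : F s2 = m := neg_inj.mp hF2
    exact hfinal s1 s2 hs1 hs2 hne12 (e1.trans e2.symm)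
  · -- f r < f p'
    have hΔeq : Δ = f p' - f r := by rw [hΔdef, abs_of_pos (by linarith)]
    obtain ⟨s1, s2, hs1, hs2, hne12, hF1, hF2⟩ :=
      aux_two_points hFc htAm htmB (by linarith) (by linarith) (by linarith)
    exact hfinal s1 s2 hs1 hs2 hne12 (hF1.trans hF2.symm)
end

section
/- Suppose that for commuting ladders of continuous surjections: maps s_i : Y → X and t_i : X → Y between compact metrizable spaces satisfy s_i ∘ t_i = f^{n_i} and t_i ∘ s_{i+1} = g^{m_i}, where f : X → X and g : Y → Y are continuous surjections and n_i, m_i are positive integers. Then the inverse limit spaces lim←(f) and lim←(g) are homeomorphic. -/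
/-- In an inverse tower `f (x (i+1)) = x i`, iterating the bonding map gives
`f^[d] (x (k+d)) = x k`. -/
private lemma tower_iter {X : Type} {f : X → X} {x : ℕ → X}
    (hx : ∀ i, f (x (i + 1)) = x i) : ∀ d k, f^[d] (x (k + d)) = x k := by
  intro d
  induction d with
  | zero => intro k; simp
  | succ d ih =>
    intro k
    rw [Function.iterate_succ_apply]
    have h : f (x (k + (d + 1))) = x (k + d) := hx (k + d)
    rw [h, ih]

/-- A commuting ladder of continuous surjections `sᵢ : Y → X`, `tᵢ : X → Y` with
`sᵢ ∘ tᵢ = f^{nᵢ}` and `tᵢ ∘ s_{i+1} = g^{mᵢ}` forces the inverse limits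
`lim←(f)` and `lim←(g)` to be homeomorphic. -/
theorem ladder_invLim_homeomorph {X Y : Type} [TopologicalSpace X] [CompactSpace X]
    [TopologicalSpace.MetrizableSpace X] [TopologicalSpace Y] [CompactSpace Y]
    [TopologicalSpace.MetrizableSpace Y]
    (f : X → X) (g : Y → Y) (hf : Continuous f) (hg : Continuous g)
    (hfs : Function.Surjective f) (hgs : Function.Surjective g)
    (s : ℕ → Y → X) (t : ℕ → X → Y)
    (hs : ∀ i, Continuous (s i)) (ht : ∀ i, Continuous (t i))
    (hss : ∀ i, Function.Surjective (s i)) (hts : ∀ i, Function.Surjective (t i))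
    (ni mi : ℕ → ℕ) (hni : ∀ i, 0 < ni i) (hmi : ∀ i, 0 < mi i)
    (hst : ∀ i, s i ∘ t i = f^[ni i])
    (hts' : ∀ i, t i ∘ s (i + 1) = g^[mi i]) :
    Nonempty ({x : ℕ → X // ∀ i, f (x (i + 1)) = x i} ≃ₜ
      {y : ℕ → Y // ∀ i, g (y (i + 1)) = y i}) := by
  classical
  -- partial sums of the exponents
  set A : ℕ → ℕ := fun j => ∑ i ∈ Finset.range j, ni i with hAdef
  set C : ℕ → ℕ := fun j => ∑ i ∈ Finset.range j, mi i with hCdef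
  have hA1 : ∀ j, A (j + 1) = A j + ni j := fun j => Finset.sum_range_succ _ _
  have hC1 : ∀ j, C (j + 1) = C j + mi j := fun j => Finset.sum_range_succ _ _
  have hAle : ∀ j, j ≤ A j := by
    intro j
    induction j with
    | zero => simp
    | succ j ih => have := hni j; rw [hA1]; omega
  have hCle : ∀ j, j ≤ C j := by
    intro j
    induction j with
    | zero => simp
    | succ j ih => have := hmi j; rw [hC1]; omega
  have hAmono : ∀ {i j : ℕ}, i ≤ j → A i ≤ A j := by
    intro i j h
    exact Finset.sum_le_sum_of_subset (Finset.range_subset_range.2 h)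
  have hCmono : ∀ {i j : ℕ}, i ≤ j → C i ≤ C j := by
    intro i j h
    exact Finset.sum_le_sum_of_subset (Finset.range_subset_range.2 h)
  -- ladder relations propagated along the towers
  have hsg : ∀ i j, i ≤ j → ∀ y, s i (g^[C j - C i] y) = f^[A j - A i] (s j y) := by
    intro i j hij
    induction j, hij using Nat.le_induction with
    | base => intro y; simp
    | succ j hij ih =>
      intro y
      have h1 : C (j + 1) - C i = (C j - C i) + mi j := by
        have := hCmono hij; rw [hC1]; omega
      have h2 : A (j + 1) - A i = (A j - A i) + ni j := by
        have := hAmono hij; rw [hA1]; omega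
      rw [h1, Function.iterate_add_apply, ih]
      have h3 : g^[mi j] y = t j (s (j + 1) y) := (congrFun (hts' j) y).symm
      have h4 : s j (t j (s (j + 1) y)) = f^[ni j] (s (j + 1) y) :=
        congrFun (hst j) (s (j + 1) y)
      rw [h3, h4, ← Function.iterate_add_apply, ← h2]
  have htf : ∀ i j, i ≤ j → ∀ z,
      t i (f^[A (j + 1) - A (i + 1)] z) = g^[C j - C i] (t j z) := by
    intro i j hij
    induction j, hij using Nat.le_induction with
    | base => intro z; simp
    | succ j hij ih =>
      intro z
      have hij1 : i + 1 ≤ j + 1 := by omega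
      have h1 : A (j + 1 + 1) - A (i + 1) = (A (j + 1) - A (i + 1)) + ni (j + 1) := by
        have := hAmono hij1; rw [hA1 (j + 1)]; omega
      have h2 : C (j + 1) - C i = (C j - C i) + mi j := by
        have := hCmono hij; rw [hC1]; omega
      rw [h1, Function.iterate_add_apply, ih]
      have h3 : f^[ni (j + 1)] z = s (j + 1) (t (j + 1) z) :=
        (congrFun (hst (j + 1)) z).symm
      have h4 : t j (s (j + 1) (t (j + 1) z)) = g^[mi j] (t (j + 1) z) :=
        congrFun (hts' j) (t (j + 1) z)
      rw [h3, h4, ← Function.iterate_add_apply, ← h2]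
  -- the forward map is a point of lim←(g)
  have hΦ : ∀ x : {x : ℕ → X // ∀ i, f (x (i + 1)) = x i}, ∀ k,
      g (g^[C (k + 2) - (k + 1)] (t (k + 2) (x.1 (A (k + 3))))) =
        g^[C (k + 1) - k] (t (k + 1) (x.1 (A (k + 2)))) := by
    intro x k
    have hx := tower_iter x.2
    have e1 : x.1 (A (k + 2)) = f^[A (k + 3) - A (k + 2)] (x.1 (A (k + 3))) := by
      have h := hx (A (k + 3) - A (k + 2)) (A (k + 2))
      have h' : A (k + 2) + (A (k + 3) - A (k + 2)) = A (k + 3) := by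
        have := hAmono (show k + 2 ≤ k + 3 by omega); omega
      rw [h'] at h; exact h.symm
    rw [e1, htf (k + 1) (k + 2) (by omega),
      ← Function.iterate_succ_apply' g (C (k + 2) - (k + 1)),
      ← Function.iterate_add_apply]
    have h1 := hCle (k + 2)
    have h2 := hCmono (show k + 1 ≤ k + 2 by omega)
    have h3 := hCle (k + 1)
    have hexp : Nat.succ (C (k + 2) - (k + 1)) = C (k + 1) - k + (C (k + 2) - C (k + 1)) := by
      omega
    rw [hexp]
  -- the backward map is a point of lim←(f)
  have hΨ : ∀ y : {y : ℕ → Y // ∀ i, g (y (i + 1)) = y i}, ∀ k,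
      f (f^[A (k + 2) - (k + 1)] (s (k + 2) (y.1 (C (k + 2))))) =
        f^[A (k + 1) - k] (s (k + 1) (y.1 (C (k + 1)))) := by
    intro y k
    have hy := tower_iter y.2
    have e1 : y.1 (C (k + 1)) = g^[C (k + 2) - C (k + 1)] (y.1 (C (k + 2))) := by
      have h := hy (C (k + 2) - C (k + 1)) (C (k + 1))
      have h' : C (k + 1) + (C (k + 2) - C (k + 1)) = C (k + 2) := by
        have := hCmono (show k + 1 ≤ k + 2 by omega); omega
      rw [h'] at h; exact h.symm
    rw [e1, hsg (k + 1) (k + 2) (by omega),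
      ← Function.iterate_succ_apply' f (A (k + 2) - (k + 1)),
      ← Function.iterate_add_apply]
    have h1 := hAle (k + 2)
    have h2 := hAmono (show k + 1 ≤ k + 2 by omega)
    have h3 := hAle (k + 1)
    have hexp : Nat.succ (A (k + 2) - (k + 1)) = A (k + 1) - k + (A (k + 2) - A (k + 1)) := by
      omega
    rw [hexp]
  refine ⟨⟨⟨fun x => ⟨fun k => g^[C (k + 1) - k] (t (k + 1) (x.1 (A (k + 2)))),
      fun k => hΦ x k⟩,
      fun y => ⟨fun k => f^[A (k + 1) - k] (s (k + 1) (y.1 (C (k + 1)))),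
      fun k => hΨ y k⟩, ?_, ?_⟩, ?_, ?_⟩⟩
  · -- left inverse
    intro x
    apply Subtype.ext
    funext k
    have hx := tower_iter x.2
    show f^[A (k + 1) - k]
        (s (k + 1) (g^[C (C (k + 1) + 1) - C (k + 1)]
          (t (C (k + 1) + 1) (x.1 (A (C (k + 1) + 2)))))) = x.1 k
    set m := C (k + 1) with hm
    have hkm : k + 1 ≤ m := hCle (k + 1)
    -- inner simplification
    have e1 : s (m + 1) (t (m + 1) (x.1 (A (m + 2)))) = x.1 (A (m + 1)) := by
      have h : s (m + 1) (t (m + 1) (x.1 (A (m + 2)))) = f^[ni (m + 1)] (x.1 (A (m + 2))) :=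
        congrFun (hst (m + 1)) (x.1 (A (m + 2)))
      rw [h]
      have h' := hx (ni (m + 1)) (A (m + 1))
      have h'' : A (m + 1) + ni (m + 1) = A (m + 2) := (hA1 (m + 1)).symm
      rw [h''] at h'
      exact h'
    have e2 : C (m + 1) - m = C (m + 1) - C (k + 1) := by rw [hm]
    rw [e2, hsg (k + 1) (m + 1) (by omega), e1, ← Function.iterate_add_apply]
    have h1 := hAle (k + 1)
    have h2 := hAmono (show k + 1 ≤ m + 1 by omega)
    have hexp : A (k + 1) - k + (A (m + 1) - A (k + 1)) = A (m + 1) - k := by omega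
    rw [hexp]
    have h := hx (A (m + 1) - k) k
    have h' : k + (A (m + 1) - k) = A (m + 1) := by omega
    rw [h'] at h
    exact h
  · -- right inverse
    intro y
    apply Subtype.ext
    funext k
    have hy := tower_iter y.2
    show g^[C (k + 1) - k]
        (t (k + 1) (f^[A (A (k + 2) + 1) - A (k + 2)]
          (s (A (k + 2) + 1) (y.1 (C (A (k + 2) + 1)))))) = y.1 k
    set m := A (k + 2) with hm
    have hkm : k + 2 ≤ m := hAle (k + 2)
    have e1 : t m (s (m + 1) (y.1 (C (m + 1)))) = y.1 (C m) := by
      have h : t m (s (m + 1) (y.1 (C (m + 1)))) = g^[mi m] (y.1 (C (m + 1))) :=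
        congrFun (hts' m) (y.1 (C (m + 1)))
      rw [h]
      have h' := hy (mi m) (C m)
      have h'' : C m + mi m = C (m + 1) := (hC1 m).symm
      rw [h''] at h'
      exact h'
    have e2 : A (m + 1) - m = A (m + 1) - A (k + 2) := by rw [hm]
    rw [e2]
    have e3 := htf (k + 1) m (by omega) (s (m + 1) (y.1 (C (m + 1))))
    -- e3 : t (k+1) (f^[A (m+1) - A (k+2)] _) = g^[C m - C (k+1)] (t m _)
    rw [e3, e1, ← Function.iterate_add_apply]
    have h1 := hCle (k + 1)
    have h2 := hCmono (show k + 1 ≤ m by omega)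
    have hexp : C (k + 1) - k + (C m - C (k + 1)) = C m - k := by omega
    rw [hexp]
    have h := hy (C m - k) k
    have h' : k + (C m - k) = C m := by omega
    rw [h'] at h
    exact h
  · -- continuity of the forward map
    apply Continuous.subtype_mk
    apply continuous_pi
    intro k
    exact (hg.iterate _).comp ((ht _).comp ((continuous_apply _).comp continuous_subtype_val))
  · -- continuity of the backward map
    apply Continuous.subtype_mk
    apply continuous_pi
    intro k
    exact (hf.iterate _).comp ((hs _).comp ((continuous_apply _).comp continuous_subtype_val))
end
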